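/- Let Q̄ be a real n × (m+1) matrix and let 1_n ∈ ℝ^n be the all-ones vector. For all θ, θ̃ ∈ ℝ^{m+1}, set z := 1_n − Q̄θ and z̃ := 1_n − Q̄θ̃, and pick any projections x ∈ Π^B_{Ω_s}(z) and x̃ ∈ Π^B_{Ω_s}(z̃). Then the subgradient inequality (1/2)‖x‖² − (1/2)‖x̃‖² ≥ ⟨−Q̄ᵀ x̃, θ − θ̃⟩ holds (i.e. −Q̄ᵀ x̃ is a subgradient at θ̃ of the function θ ↦ (1/2)‖Π_{Ω_s}(1_n − Q̄θ)‖²). -/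
import Mathlib

open scoped BigOperators Matrix RealInnerProductSpace

noncomputable section

def Omega (n s : ℕ) : Set (EuclideanSpace ℝ (Fin n)) :=
  {x | (Finset.univ.filter fun i => 0 < x i).card ≤ s}

def projSet (n s : ℕ) (z : EuclideanSpace ℝ (Fin n)) : Set (EuclideanSpace ℝ (Fin n)) :=
  {x | x ∈ Omega n s ∧ ‖z - x‖ = Metric.infDist z (Omega n s)}

def toEuc {n : ℕ} (v : Fin n → ℝ) : EuclideanSpace ℝ (Fin n) :=
  (WithLp.equiv 2 (Fin n → ℝ)).symm v

lemma zero_mem_Omega (n s : ℕ) : (0 : EuclideanSpace ℝ (Fin n)) ∈ Omega n s := by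
  simp [Omega]

lemma smul_mem_Omega {n s : ℕ} {x : EuclideanSpace ℝ (Fin n)} (t : ℝ) (ht : 0 < t)
    (hx : x ∈ Omega n s) : t • x ∈ Omega n s := by
  have hfil : (Finset.univ.filter fun i => 0 < t * x i)
      = (Finset.univ.filter fun i => 0 < x i) := by
    apply Finset.filter_congr
    intro i _
    constructor
    · intro h; nlinarith
    · intro h; nlinarith
  have hap : ∀ i, (t • x) i = t * x i := fun i => rfl
  simpa [Omega, hap, hfil] using hx

lemma proj_le {n s : ℕ} {z x : EuclideanSpace ℝ (Fin n)} (hx : x ∈ projSet n s z)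
    {y : EuclideanSpace ℝ (Fin n)} (hy : y ∈ Omega n s) : ‖z - x‖ ≤ ‖z - y‖ := by
  rw [hx.2, ← dist_eq_norm]
  exact Metric.infDist_le_dist_of_mem hy

lemma proj_inner {n s : ℕ} {z x : EuclideanSpace ℝ (Fin n)} (hx : x ∈ projSet n s z) :
    ⟪z, x⟫ = ‖x‖ ^ 2 := by
  by_cases hx0 : x = 0
  · simp [hx0]
  have ha : (0:ℝ) < ‖x‖ ^ 2 := by
    have h := norm_pos_iff.mpr hx0
    positivity
  set a := ‖x‖ ^ 2 with ha'
  set c := ⟪z, x⟫ with hc'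
  have expand : ∀ t : ℝ, ‖z - t • x‖ ^ 2 = ‖z‖ ^ 2 - 2 * (t * c) + t ^ 2 * a := by
    intro t
    rw [norm_sub_sq_real, real_inner_smul_right, norm_smul, mul_pow,
      Real.norm_eq_abs, sq_abs]
    try ring
  have h0 : ‖z - x‖ ≤ ‖z‖ := by
    simpa using proj_le hx (zero_mem_Omega n s)
  have h0' : ‖z - x‖ ^ 2 ≤ ‖z‖ ^ 2 := by
    have := norm_nonneg (z - x); nlinarith
  have hx1 : ‖z - x‖ ^ 2 = ‖z‖ ^ 2 - 2 * c + a := by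
    simpa using expand 1
  have hca : 0 < c := by nlinarith
  have ht : (0:ℝ) < c / a := by positivity
  have h1 : ‖z - x‖ ≤ ‖z - (c / a) • x‖ := proj_le hx (smul_mem_Omega _ ht hx.1)
  have h1' : ‖z - x‖ ^ 2 ≤ ‖z - (c / a) • x‖ ^ 2 := by
    have := norm_nonneg (z - x); nlinarith
  rw [expand (c / a), hx1] at h1'
  have hmul := mul_le_mul_of_nonneg_left h1' ha.le
  have e2 : a * (‖z‖ ^ 2 - 2 * (c / a * c) + (c / a) ^ 2 * a) = a * ‖z‖ ^ 2 - c ^ 2 := by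
    field_simp
    ring
  rw [e2] at hmul
  have h3 : (c - a) ^ 2 ≤ 0 := by nlinarith [hmul]
  have h4 : c - a = 0 := by
    have := le_antisymm h3 (sq_nonneg (c - a))
    exact pow_eq_zero_iff (two_ne_zero) |>.mp this
  linarith

/-- The subgradient inequality: with `z = 1_n − Q̄θ`, `z̃ = 1_n − Q̄θ̃`, `x ∈ Π^B_{Ω_s}(z)`,
`x̃ ∈ Π^B_{Ω_s}(z̃)`, one has `(1/2)‖x‖² − (1/2)‖x̃‖² ≥ ⟨−Q̄ᵀx̃, θ − θ̃⟩`. -/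
theorem stmt_6 (n m s : ℕ) (hn : 0 < n) (hm : 0 < m) (hs : 0 < s) (hsn : s ≤ n)
    (Qb : Matrix (Fin n) (Fin (m + 1)) ℝ) (θ θt : Fin (m + 1) → ℝ)
    (x xt : EuclideanSpace ℝ (Fin n))
    (hx : x ∈ projSet n s (toEuc (1 - Qb.mulVec θ)))
    (hxt : xt ∈ projSet n s (toEuc (1 - Qb.mulVec θt))) :
    (1 / 2) * ‖x‖ ^ 2 - (1 / 2) * ‖xt‖ ^ 2 ≥
      (-(Qb.transpose.mulVec fun i => xt i)) ⬝ᵥ (θ - θt) := by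
  set z : EuclideanSpace ℝ (Fin n) := toEuc (1 - Qb.mulVec θ) with hz
  set zt : EuclideanSpace ℝ (Fin n) := toEuc (1 - Qb.mulVec θt) with hzt
  have hzx : ⟪z, x⟫ = ‖x‖ ^ 2 := proj_inner hx
  have hztxt : ⟪zt, xt⟫ = ‖xt‖ ^ 2 := proj_inner hxt
  have hle : ‖z - x‖ ≤ ‖z - xt‖ := proj_le hx hxt.1
  have hle2 : ‖z - x‖ ^ 2 ≤ ‖z - xt‖ ^ 2 := by
    have := norm_nonneg (z - x); nlinarith
  rw [norm_sub_sq_real, norm_sub_sq_real, hzx] at hle2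
  -- hle2 : ‖z‖^2 - 2‖x‖^2 + ‖x‖^2 ≤ ‖z‖^2 - 2⟪z,xt⟫ + ‖xt‖^2
  have key : (-(Qb.transpose.mulVec fun i => xt i)) ⬝ᵥ (θ - θt) = ⟪z - zt, xt⟫ := by
    have hzzt : ∀ i, (z - zt) i = -(Qb.mulVec (θ - θt)) i := by
      intro i
      have h1 : (z - zt) i = z i - zt i := rfl
      have h2 : z i = 1 - Qb.mulVec θ i := rfl
      have h3 : zt i = 1 - Qb.mulVec θt i := rfl
      rw [h1, h2, h3]
      simp only [Matrix.mulVec, dotProduct, Pi.sub_apply, mul_sub,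
        Finset.sum_sub_distrib, Pi.neg_apply]
      ring
    rw [real_inner_comm]
    simp only [PiLp.inner_apply, RCLike.inner_apply, starRingEnd_apply, star_trivial]
    simp only [hzzt]
    simp [dotProduct, Matrix.mulVec, Matrix.vecMul, Matrix.transpose,
      Finset.sum_mul, Finset.mul_sum]
    rw [Finset.sum_comm]
    apply Finset.sum_congr rfl
    intro i _
    apply Finset.sum_congr rfl
    intro j _
    ring
  rw [ge_iff_le, key, inner_sub_left, hztxt]
  linarith
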